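/- arXiv:2412.04435 — 2 statements merged into one kernel-verified Lean document; each statement's English description precedes it below -/
import Mathlib

section
/- Let N ≥ 2 be an integer, ρ ∈ (−1, 0), and η ∈ (−ρ, ∞) with E_N(η) = E_N(ρ). Write S_k = T_k(ρ, η)/F_{N−k}(η) and define α_1 = S_1, α_2 = −(1/ρ)S_1 + (S_2 − S_1), and α_k = −(1/ρ)(S_{k−1} − S_{k−2}) + (S_k − S_{k−1}) for 3 ≤ k ≤ N−1. Then α_k ≥ 0 for every k = 1, …, N−1. -/
open Finset

noncomputable def Efun (k : ℕ) (x : ℝ) : ℝ := ∑ j ∈ Finset.Icc 1 (2 * k), x ^ (-(j : ℤ))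

noncomputable def Ffun (k : ℕ) (x : ℝ) : ℝ := ∑ j ∈ Finset.Icc 1 k, x ^ j

noncomputable def Tfun (k : ℕ) (ρ η : ℝ) : ℝ := Efun k η - Efun k ρ

/-!
Pairing the terms `x⁻¹ ^ (2i-1) + x⁻¹ ^ (2i) = (x + 1) (x⁻²) ^ i` gives `E_k(x) = (x + 1) F_k(x⁻²)`.
With `a = η⁻²`, `b = ρ⁻²` (so `a ≤ b` as `|ρ| < η`, and `1 ≤ η b` as `ρ² < -ρ < η`), the constraint
`E_N(η) = E_N(ρ)` turns `T_n` into a positive multiple of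
`F_n(a) F_N(b) - F_N(a) F_n(b) = ∑_{i ≤ n < j ≤ N} (a^i b^j - a^j b^i)`.
The summands are nonnegative and grow at least by the factor `1/η` in `j`; this makes
`S_n = T_n / F_{N-n}(η)` nondecreasing in `n`, starting from `S_0 = 0`. Since `-1/ρ > 0`, every
`α_k` is then a nonnegative combination of nonnegative increments of `S`.
-/

def crossPow (a b : ℝ) (i j : ℕ) : ℝ := a ^ i * b ^ j - a ^ j * b ^ i

def crossSum (a b : ℝ) (n N : ℕ) : ℝ := ∑ i ∈ Icc 1 n, ∑ j ∈ Ioc n N, crossPow a b i j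

lemma sum_Ioc_eq_add_sum_Ioc_succ (f : ℕ → ℝ) {k N : ℕ} (h : k < N) :
    ∑ j ∈ Ioc k N, f j = f (k + 1) + ∑ j ∈ Ioc (k + 1) N, f j := by
  rw [← sum_Ioc_consecutive f (Nat.le_succ k) h, Nat.Ioc_succ_singleton, sum_singleton]

lemma Ffun_succ (m : ℕ) (x : ℝ) : Ffun (m + 1) x = Ffun m x + x ^ (m + 1) :=
  sum_Icc_succ_top (by omega) _

lemma Ffun_nonneg {x : ℝ} (hx : 0 ≤ x) (m : ℕ) : 0 ≤ Ffun m x :=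
  sum_nonneg fun j _ => pow_nonneg hx j

lemma Ffun_pos {x : ℝ} (hx : 0 < x) {m : ℕ} (hm : 1 ≤ m) : 0 < Ffun m x :=
  sum_pos (fun j _ => pow_pos hx j) (nonempty_Icc.mpr hm)

lemma Efun_eq_mul_Ffun {x : ℝ} (hx : x ≠ 0) (k : ℕ) :
    Efun k x = (x + 1) * Ffun k (x⁻¹ ^ 2) := by
  induction k with
  | zero => simp [Efun, Ffun]
  | succ n ih =>
    have hzpow : ∀ j : ℕ, x ^ (-(j : ℤ)) = x⁻¹ ^ j := fun j => by
      rw [zpow_neg, zpow_natCast, inv_pow]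
    have hpair : x⁻¹ ^ (2 * n + 1) + x⁻¹ ^ (2 * n + 1 + 1) = (x + 1) * (x⁻¹ ^ 2) ^ (n + 1) := by
      linear_combination (-x⁻¹ ^ (2 * n + 1)) * mul_inv_cancel₀ hx
    rw [Efun, show 2 * (n + 1) = 2 * n + 1 + 1 by ring, sum_Icc_succ_top (by omega),
      sum_Icc_succ_top (by omega), ← Efun, ih, hzpow, hzpow, add_assoc, hpair, Ffun_succ]
    ring

lemma Ffun_mul_sub_eq_crossSum (a b : ℝ) {n N : ℕ} (hnN : n ≤ N) :
    Ffun n a * Ffun N b - Ffun N a * Ffun n b = crossSum a b n N := by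
  have hIcc : ∀ M, Icc 1 M = Ioc 0 M := Icc_add_one_left_eq_Ioc 0
  have hsplit : ∀ c : ℝ, Ffun N c = Ffun n c + ∑ j ∈ Ioc n N, c ^ j := fun c => by
    rw [Ffun, Ffun, hIcc, hIcc]
    exact (sum_Ioc_consecutive _ (Nat.zero_le n) hnN).symm
  rw [hsplit a, hsplit b]
  simp only [crossSum, crossPow, sum_sub_distrib, ← mul_sum, ← sum_mul, Ffun]
  ring

section Cross

variable {a b η : ℝ}

lemma crossPow_nonneg (ha : 0 ≤ a) (hab : a ≤ b) {i j : ℕ} (hij : i ≤ j) :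
    0 ≤ crossPow a b i j := by
  obtain ⟨u, rfl⟩ := Nat.exists_eq_add_of_le hij
  have hpow : a ^ u ≤ b ^ u := pow_le_pow_left₀ ha hab u
  have hprod : 0 ≤ a ^ i * b ^ i := mul_nonneg (pow_nonneg ha i) (pow_nonneg (ha.trans hab) i)
  calc 0 ≤ a ^ i * b ^ i * (b ^ u - a ^ u) := mul_nonneg hprod (by linarith)
    _ = crossPow a b i (i + u) := by rw [crossPow, pow_add, pow_add]; ring

lemma crossPow_le_mul_crossPow_succ (ha : 0 ≤ a) (hab : a ≤ b) (hη : 0 ≤ η) (hηb : 1 ≤ η * b)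
    {i k : ℕ} (hik : i ≤ k) : crossPow a b i k ≤ η * crossPow a b i (k + 1) := by
  have key : η * crossPow a b i (k + 1) - crossPow a b i k
      = (η * b - 1) * crossPow a b i k + η * a ^ k * b ^ i * (b - a) := by
    simp only [crossPow]; ring
  have hpos : 0 ≤ η * a ^ k * b ^ i :=
    mul_nonneg (mul_nonneg hη (pow_nonneg ha k)) (pow_nonneg (ha.trans hab) i)
  have := add_nonneg (mul_nonneg (sub_nonneg.mpr hηb) (crossPow_nonneg ha hab hik))
    (mul_nonneg hpos (sub_nonneg.mpr hab))
  linarith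

lemma Ffun_mul_crossPow_le (ha : 0 ≤ a) (hab : a ≤ b) (hη : 0 ≤ η) (hηb : 1 ≤ η * b)
    (m : ℕ) {i k : ℕ} (hik : i ≤ k) :
    Ffun m η * crossPow a b i k ≤ η ^ (m + 1) * ∑ j ∈ Ioc k (k + m), crossPow a b i j := by
  induction m generalizing k with
  | zero => simp [Ffun]
  | succ m ih =>
    have hstep := crossPow_le_mul_crossPow_succ ha hab hη hηb hik
    have hF := Ffun_nonneg hη m
    have hnext := ih (k := k + 1) (by omega)
    rw [Ffun_succ, sum_Ioc_eq_add_sum_Ioc_succ _ (by omega), show k + (m + 1) = k + 1 + m by ring]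
    calc (Ffun m η + η ^ (m + 1)) * crossPow a b i k
        ≤ (Ffun m η + η ^ (m + 1)) * (η * crossPow a b i (k + 1)) := by gcongr
      _ = η * (Ffun m η * crossPow a b i (k + 1)) + η ^ (m + 2) * crossPow a b i (k + 1) := by
        ring
      _ ≤ η * (η ^ (m + 1) * ∑ j ∈ Ioc (k + 1) (k + 1 + m), crossPow a b i j)
          + η ^ (m + 2) * crossPow a b i (k + 1) := by gcongr
      _ = η ^ (m + 1 + 1) * (crossPow a b i (k + 1)
          + ∑ j ∈ Ioc (k + 1) (k + 1 + m), crossPow a b i j) := by ring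

lemma crossSum_mul_Ffun_le (ha : 0 ≤ a) (hab : a ≤ b) (hη : 0 ≤ η) (hηb : 1 ≤ η * b)
    (t m : ℕ) :
    crossSum a b t (t + 1 + m) * Ffun m η ≤ crossSum a b (t + 1) (t + 1 + m) * Ffun (m + 1) η := by
  set P := ∑ i ∈ Icc 1 t, ∑ j ∈ Ioc (t + 1) (t + 1 + m), crossPow a b i j
  set Q := ∑ i ∈ Icc 1 t, crossPow a b i (t + 1)
  set R := ∑ j ∈ Ioc (t + 1) (t + 1 + m), crossPow a b (t + 1) j
  have hleft : crossSum a b t (t + 1 + m) = Q + P := by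
    rw [crossSum, ← sum_add_distrib]
    exact sum_congr rfl fun i _ => sum_Ioc_eq_add_sum_Ioc_succ _ (by omega : t < t + 1 + m)
  have hright : crossSum a b (t + 1) (t + 1 + m) = P + R := sum_Icc_succ_top (by omega) _
  have hQ : Ffun m η * Q ≤ η ^ (m + 1) * P := by
    rw [mul_sum, mul_sum]
    exact sum_le_sum fun i hi =>
      Ffun_mul_crossPow_le ha hab hη hηb m (i := i) (k := t + 1) (by simp only [mem_Icc] at hi; omega)
  have hP : 0 ≤ P := sum_nonneg fun i hi => sum_nonneg fun j hj =>
    crossPow_nonneg ha hab (by simp only [mem_Icc, mem_Ioc] at hi hj; omega)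
  have hR : 0 ≤ R := sum_nonneg fun j hj =>
    crossPow_nonneg ha hab (by simp only [mem_Ioc] at hj; omega)
  rw [hleft, hright, Ffun_succ]
  nlinarith [mul_nonneg hR (add_nonneg (Ffun_nonneg hη m) (pow_nonneg hη (m + 1)))]

end Cross

lemma Tfun_eq_mul_crossSum {ρ η : ℝ} (hρ : ρ ≠ 0) (hη : η ≠ 0) {N : ℕ} (hN : 1 ≤ N)
    (hopt : Efun N η = Efun N ρ) {n : ℕ} (hnN : n ≤ N) :
    Tfun n ρ η = (ρ + 1) / Ffun N (η⁻¹ ^ 2) * crossSum (η⁻¹ ^ 2) (ρ⁻¹ ^ 2) n N := by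
  have hA : 0 < Ffun N (η⁻¹ ^ 2) := Ffun_pos (by positivity) hN
  rw [Efun_eq_mul_Ffun hη, Efun_eq_mul_Ffun hρ] at hopt
  rw [← Ffun_mul_sub_eq_crossSum _ _ hnN, Tfun, Efun_eq_mul_Ffun hη, Efun_eq_mul_Ffun hρ,
    div_mul_eq_mul_div, eq_div_iff hA.ne']
  linear_combination Ffun n (η⁻¹ ^ 2) * hopt

lemma Tfun_div_Ffun_le_succ {ρ η : ℝ} (hρ : ρ ∈ Set.Ioo (-1 : ℝ) 0) (hη : -ρ < η) {N : ℕ}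
    (hopt : Efun N η = Efun N ρ) {t : ℕ} (ht : t + 2 ≤ N) :
    Tfun t ρ η / Ffun (N - t) η ≤ Tfun (t + 1) ρ η / Ffun (N - (t + 1)) η := by
  obtain ⟨hρ1, hρ0⟩ := hρ
  have hη0 : 0 < η := by linarith
  obtain ⟨m, rfl⟩ : ∃ m, N = t + 1 + m := ⟨N - (t + 1), by omega⟩
  have hab : η⁻¹ ^ 2 ≤ ρ⁻¹ ^ 2 := by
    rw [inv_pow, inv_pow]
    exact inv_anti₀ (sq_pos_of_neg hρ0) (by nlinarith)
  have hηb : 1 ≤ η * ρ⁻¹ ^ 2 := by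
    rw [inv_pow, ← div_eq_mul_inv, one_le_div (sq_pos_of_neg hρ0)]
    nlinarith
  have hc : 0 ≤ (ρ + 1) / Ffun (t + 1 + m) (η⁻¹ ^ 2) :=
    div_nonneg (by linarith) (Ffun_nonneg (by positivity) _)
  rw [Tfun_eq_mul_crossSum hρ0.ne hη0.ne' (by omega) hopt (by omega),
    Tfun_eq_mul_crossSum hρ0.ne hη0.ne' (by omega) hopt (by omega), mul_div_assoc, mul_div_assoc,
    show t + 1 + m - t = m + 1 by omega, show t + 1 + m - (t + 1) = m by omega]
  refine mul_le_mul_of_nonneg_left ?_ hc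
  rw [div_le_div_iff₀ (Ffun_pos hη0 (by omega)) (Ffun_pos hη0 (by omega))]
  exact crossSum_mul_Ffun_le (by positivity) hab hη0.le hηb t m

theorem alpha_nonneg_general
    (N : ℕ)
    (ρ η : ℝ) (hρ : ρ ∈ Set.Ioo (-1 : ℝ) 0) (hη : -ρ < η)
    (hopt : Efun N η = Efun N ρ)
    (S : ℕ → ℝ) (hS : ∀ k, S k = Tfun k ρ η / Ffun (N - k) η)
    (α : ℕ → ℝ)
    (hα1 : α 1 = S 1)
    (hα2 : α 2 = -(1 / ρ) * S 1 + (S 2 - S 1))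
    (hαk : ∀ k, 3 ≤ k → k ≤ N - 1 →
      α k = -(1 / ρ) * (S (k - 1) - S (k - 2)) + (S k - S (k - 1))) :
    ∀ k, 1 ≤ k → k ≤ N - 1 → 0 ≤ α k := by
  have hmono : ∀ t, t + 2 ≤ N → S t ≤ S (t + 1) := fun t ht => by
    simpa only [hS] using Tfun_div_Ffun_le_succ hρ hη hopt ht
  have hS0 : S 0 = 0 := by simp [hS, Tfun, Efun]
  have hρinv : 0 ≤ -(1 / ρ) := by
    have := one_div_neg.mpr hρ.2
    linarith
  intro k hk1 hkN
  match k, hk1 with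
  | 1, _ => simpa [hα1, hS0] using hmono 0 (by omega)
  | 2, _ =>
    have := mul_nonneg hρinv (hS0 ▸ hmono 0 (by omega))
    have := hmono 1 (by omega)
    rw [hα2]; linarith
  | j + 3, _ =>
    have := mul_nonneg hρinv (sub_nonneg.mpr (hmono (j + 1) (by omega)))
    have := hmono (j + 2) (by omega)
    rw [hαk (j + 3) (by omega) hkN, show j + 3 - 1 = j + 2 by omega,
      show j + 3 - 2 = j + 1 by omega]
    linarith

/-- Non-negativity of the multipliers `α_k` of (14). -/
theorem alpha_nonneg
    (N : ℕ) (hN : 2 ≤ N)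
    (ρ η : ℝ) (hρ : ρ ∈ Set.Ioo (-1 : ℝ) 0) (hη : -ρ < η)
    (hopt : Efun N η = Efun N ρ)
    (S : ℕ → ℝ) (hS : ∀ k, S k = Tfun k ρ η / Ffun (N - k) η)
    (α : ℕ → ℝ)
    (hα1 : α 1 = S 1)
    (hα2 : α 2 = -(1 / ρ) * S 1 + (S 2 - S 1))
    (hαk : ∀ k, 3 ≤ k → k ≤ N - 1 →
      α k = -(1 / ρ) * (S (k - 1) - S (k - 2)) + (S k - S (k - 1))) :
    ∀ k, 1 ≤ k → k ≤ N - 1 → 0 ≤ α k :=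
  alpha_nonneg_general N ρ η hρ hη hopt S hS α hα1 hα2 hαk
end

section
/- Let N ≥ 3 be an integer, ρ ∈ (−1, 0), and η ∈ (−ρ, 1] (so in particular η ∈ (0, 1]) with E_N(η) = E_N(ρ). Then for every k with 1 ≤ k ≤ N−2, ( Σ_{j=0}^{N−k−1} η^{−2j} ) · T_{k+1}(ρ, η) ≥ ( Σ_{j=1}^{N−k−1} η^{−2j} ) · T_k(ρ, η). -/
open Finset

/-!
Write `y = η⁻¹` and `z = ρ⁻¹`, so that `z < -1` and `y² < z²`. The decrements
`d m = T_m - T_{m+1} = z^(2m+1) + z^(2m+2) - y^(2m+1) - y^(2m+2)` grow at least geometrically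
with ratio `y²`, since `d (m+1) - y² d m = (z² - y²) z^(2m+1) (1 + z) ≥ 0`. As `T_N = 0`,
telescoping gives `T_k = ∑_{j < N-k} d (k+j) ≥ (∑_{j < N-k} y^(2j)) d k`, and this is the claim
after expanding `T_{k+1} = T_k - d k`.
-/

section GeometricGrowth

variable {R : Type*} [CommRing R] [PartialOrder R] [IsOrderedRing R] {u : R}

theorem pow_mul_le_of_mul_le_succ {d : ℕ → R} (hu : 0 ≤ u) (hd : ∀ m, u * d m ≤ d (m + 1))
    (m j : ℕ) : u ^ j * d m ≤ d (m + j) := by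
  induction j with
  | zero => simp
  | succ j ih =>
    calc u ^ (j + 1) * d m = u * (u ^ j * d m) := by ring
      _ ≤ u * d (m + j) := mul_le_mul_of_nonneg_left ih hu
      _ ≤ d (m + (j + 1)) := hd (m + j)

theorem geom_sum_mul_sub_le_sub {T : ℕ → R} (hu : 0 ≤ u)
    (hT : ∀ m, u * (T m - T (m + 1)) ≤ T (m + 1) - T (m + 2)) (k n : ℕ) :
    (∑ j ∈ range n, u ^ j) * (T k - T (k + 1)) ≤ T k - T (k + n) := by
  have htelescope := sum_range_sub' (fun j => T (k + j)) n
  rw [add_zero] at htelescope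
  rw [sum_mul, ← htelescope]
  exact sum_le_sum fun j _ =>
    pow_mul_le_of_mul_le_succ (d := fun m => T m - T (m + 1)) hu hT k j

end GeometricGrowth

theorem odd_even_pow_sum_growth {y z : ℝ} (hz : z < -1) (hyz : y ^ 2 ≤ z ^ 2) (m : ℕ) :
    y ^ 2 * (z ^ (2 * m + 1) + z ^ (2 * m + 2) - y ^ (2 * m + 1) - y ^ (2 * m + 2)) ≤
      z ^ (2 * m + 3) + z ^ (2 * m + 4) - y ^ (2 * m + 3) - y ^ (2 * m + 4) := by
  have hodd : z ^ (2 * m + 1) < 0 := Odd.pow_neg ⟨m, rfl⟩ (by linarith)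
  have hgap : 0 ≤ (z ^ 2 - y ^ 2) * (z ^ (2 * m + 1) * (1 + z)) :=
    mul_nonneg (by linarith) (mul_nonneg_of_nonpos_of_nonpos hodd.le (by linarith))
  linarith [show (z ^ 2 - y ^ 2) * (z ^ (2 * m + 1) * (1 + z)) =
      z ^ (2 * m + 3) + z ^ (2 * m + 4) - y ^ (2 * m + 3) - y ^ (2 * m + 4) -
        y ^ 2 * (z ^ (2 * m + 1) + z ^ (2 * m + 2) - y ^ (2 * m + 1) - y ^ (2 * m + 2)) by ring]

theorem Efun_succ (k : ℕ) (x : ℝ) :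
    Efun (k + 1) x = Efun k x + x⁻¹ ^ (2 * k + 1) + x⁻¹ ^ (2 * k + 2) := by
  simp only [Efun, zpow_neg, zpow_natCast, ← inv_pow]
  rw [show 2 * (k + 1) = 2 * k + 1 + 1 by ring, sum_Icc_succ_top (by omega),
    sum_Icc_succ_top (by omega)]

theorem Tfun_sub_Tfun_succ (k : ℕ) (ρ η : ℝ) :
    Tfun k ρ η - Tfun (k + 1) ρ η =
      ρ⁻¹ ^ (2 * k + 1) + ρ⁻¹ ^ (2 * k + 2) - η⁻¹ ^ (2 * k + 1) - η⁻¹ ^ (2 * k + 2) := by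
  simp only [Tfun, Efun_succ]
  ring

theorem sq_inv_mul_Tfun_sub_le {ρ η : ℝ} (hρ : ρ ∈ Set.Ioo (-1 : ℝ) 0) (hη : -ρ < η) (m : ℕ) :
    η⁻¹ ^ 2 * (Tfun m ρ η - Tfun (m + 1) ρ η) ≤ Tfun (m + 1) ρ η - Tfun (m + 2) ρ η := by
  obtain ⟨hρ1, hρ0⟩ := hρ
  have hz : ρ⁻¹ < -1 := (inv_lt_of_neg hρ0 (by norm_num)).2 (by rwa [inv_neg, inv_one])
  have hyz : η⁻¹ ^ 2 ≤ ρ⁻¹ ^ 2 := by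
    rw [inv_pow, inv_pow]
    exact inv_anti₀ (by nlinarith) (by nlinarith)
  rw [Tfun_sub_Tfun_succ, Tfun_sub_Tfun_succ]
  convert odd_even_pow_sum_growth hz hyz m using 2 <;> ring_nf

theorem zpow_neg_two_mul (η : ℝ) (j : ℕ) : η ^ (-(2 * (j : ℤ))) = (η⁻¹ ^ 2) ^ j := by
  rw [← pow_mul, inv_pow, ← zpow_natCast, ← zpow_neg, Nat.cast_mul, Nat.cast_ofNat]

theorem sum_range_succ_eq_add_sum_Icc {M : Type*} [AddCommMonoid M] (f : ℕ → M) (n : ℕ) :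
    ∑ j ∈ range (n + 1), f j = f 0 + ∑ j ∈ Icc 1 n, f j := by
  rw [range_eq_Ico, sum_eq_sum_Ico_succ_bot (Nat.succ_pos n), ← Ico_add_one_right_eq_Icc]
  rfl

theorem case_eta_le_one_general
    (N : ℕ)
    (ρ η : ℝ) (hρ : ρ ∈ Set.Ioo (-1 : ℝ) 0) (hη1 : -ρ < η)
    (hopt : Efun N η = Efun N ρ) :
    ∀ k, 1 ≤ k → k ≤ N - 2 →
      (∑ j ∈ Finset.range (N - k), η ^ (-(2 * (j : ℤ)))) * Tfun (k + 1) ρ η ≥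
        (∑ j ∈ Finset.Icc 1 (N - k - 1), η ^ (-(2 * (j : ℤ)))) * Tfun k ρ η := by
  intro k hk1 hk2
  obtain ⟨n, hn⟩ : ∃ n, N - k = n + 1 := ⟨N - k - 1, by omega⟩
  have hTN : Tfun (k + (n + 1)) ρ η = 0 := by
    rw [← hn, Nat.add_sub_cancel' (by omega), Tfun, hopt, sub_self]
  have hgrowth := geom_sum_mul_sub_le_sub (T := fun m => Tfun m ρ η) (by positivity)
    (sq_inv_mul_Tfun_sub_le hρ hη1) k (n + 1)
  simp only [hTN, sub_zero] at hgrowth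
  simp only [zpow_neg_two_mul, hn, Nat.add_sub_cancel]
  rw [sum_range_succ_eq_add_sum_Icc, pow_zero] at hgrowth ⊢
  linarith

/-- Case `η ∈ (0, 1]` of the proof of Proposition 3:
`(Σ_{j=0}^{N-k-1} η^{-2j})·T_{k+1}(ρ,η) ≥ (Σ_{j=1}^{N-k-1} η^{-2j})·T_k(ρ,η)`. -/
theorem case_eta_le_one
    (N : ℕ) (hN : 3 ≤ N)
    (ρ η : ℝ) (hρ : ρ ∈ Set.Ioo (-1 : ℝ) 0) (hη1 : -ρ < η) (hη2 : η ≤ 1)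
    (hopt : Efun N η = Efun N ρ) :
    ∀ k, 1 ≤ k → k ≤ N - 2 →
      (∑ j ∈ Finset.range (N - k), η ^ (-(2 * (j : ℤ)))) * Tfun (k + 1) ρ η ≥
        (∑ j ∈ Finset.Icc 1 (N - k - 1), η ^ (-(2 * (j : ℤ)))) * Tfun k ρ η :=
  case_eta_le_one_general N ρ η hρ hη1 hopt
end
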